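/- For n ≥ 0, n! · Σ_{F∈F(n)} Π_{v∈V(F)} 1/h_v = (2n−1)!!, the product of the odd numbers 1·3·5···(2n−1). -/

import Mathlib

open Polynomial

inductive PlaneTree : Type where
  | node : List PlaneTree → PlaneTree

namespace PlaneTree

/-- total number of vertices -/
def numVertices : PlaneTree → ℕ
  | node ts => 1 + (ts.attach.map (fun t => numVertices t.1)).sum
decreasing_by simp only [PlaneTree.node.sizeOf_spec]; exact Nat.lt_add_left 1 (List.sizeOf_lt_of_mem t.2)

/-- number of internal vertices (vertices with at least one child) -/
def numInternal : PlaneTree → ℕ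
  | node ts => (if ts.isEmpty then 0 else 1) + (ts.attach.map (fun t => numInternal t.1)).sum
decreasing_by simp only [PlaneTree.node.sizeOf_spec]; exact Nat.lt_add_left 1 (List.sizeOf_lt_of_mem t.2)

/-- product of `g h_v` over all internal vertices `v`, where `h_v` is the number of
internal vertices of the subtree rooted at `v` -/
def internalHookProd {α : Type} [CommMonoid α] (g : ℕ → α) : PlaneTree → α
  | node ts =>
    (if ts.isEmpty then 1 else g (numInternal (node ts))) *
      (ts.attach.map (fun t => internalHookProd g t.1)).prod
decreasing_by simp only [PlaneTree.node.sizeOf_spec]; exact Nat.lt_add_left 1 (List.sizeOf_lt_of_mem t.2)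

/-- product of `g h_v` over all vertices `v`, where `h_v` is the number of
vertices of the subtree rooted at `v` -/
def vertexHookProd {α : Type} [CommMonoid α] (g : ℕ → α) : PlaneTree → α
  | node ts =>
    g (numVertices (node ts)) * (ts.attach.map (fun t => vertexHookProd g t.1)).prod
decreasing_by simp only [PlaneTree.node.sizeOf_spec]; exact Nat.lt_add_left 1 (List.sizeOf_lt_of_mem t.2)

/-- every internal vertex has exactly `a` children -/
def IsFullAry (a : ℕ) : PlaneTree → Prop
  | node ts => (ts.length = 0 ∨ ts.length = a) ∧ ∀ t ∈ ts, IsFullAry a t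

/-- `IsKMAry k m b T`: with the root of `T` viewed as being on a level of parity `b`
(`b = false` meaning even), every vertex on an even level has `k` children and
every vertex on an odd level has `m` or `0` children. -/
def IsKMAry (k m : ℕ) : Bool → PlaneTree → Prop
  | b, node ts =>
    (if b then ts.length = m ∨ ts.length = 0 else ts.length = k) ∧
      ∀ t ∈ ts, IsKMAry k m (!b) t

/-- number of vertices on levels of parity `b`, the root having parity `cur` -/
def parityVertices (b cur : Bool) : PlaneTree → ℕ
  | node ts =>
    (if cur = b then 1 else 0) + (ts.attach.map (fun t => parityVertices b (!cur) t.1)).sum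
termination_by T => sizeOf T
decreasing_by simp only [PlaneTree.node.sizeOf_spec]; exact Nat.lt_add_left 1 (List.sizeOf_lt_of_mem t.2)

/-- number of internal vertices on levels of parity `b`, the root having parity `cur` -/
def parityInternal (b cur : Bool) : PlaneTree → ℕ
  | node ts =>
    (if cur = b ∧ ¬ts.isEmpty then 1 else 0) +
      (ts.attach.map (fun t => parityInternal b (!cur) t.1)).sum
termination_by T => sizeOf T
decreasing_by simp only [PlaneTree.node.sizeOf_spec]; exact Nat.lt_add_left 1 (List.sizeOf_lt_of_mem t.2)

/-- the order of a `(k,m)`-ary tree: the number of internal (crucial) vertices on odd levels -/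
def kmOrder (T : PlaneTree) : ℕ := parityInternal true false T

end PlaneTree

/-!
Splitting off the first tree of a forest, and then the root of that tree, the hook sums
`f n = Σ_{F ∈ F(n)} Π_v 1/h_v` satisfy `f 0 = 1` and
`f (n + 1) = Σ_{i + k = n} f i / (i + 1) * f k`. In generating-function terms this is
`F = 1 + (∫ F) F`, whose solution is `(1 - 2x)^{-1/2}`. Its coefficients `(2n - 1)!! / n!`
satisfy the same recursion, which is checked by a Gosper-type telescoping sum.
-/

open Finset

/-- The coefficient of `x ^ n` in `(1 - 2x)^{-1/2}`. -/
noncomputable def invSqrtCoeff (n : ℕ) : ℚ :=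
  (∏ i ∈ range n, ((2 * i + 1 : ℕ) : ℚ)) / n.factorial

@[simp]
theorem invSqrtCoeff_zero : invSqrtCoeff 0 = 1 := by
  simp [invSqrtCoeff]

theorem succ_mul_invSqrtCoeff_succ (n : ℕ) :
    ((n : ℚ) + 1) * invSqrtCoeff (n + 1) = (2 * n + 1) * invSqrtCoeff n := by
  have := n.factorial_pos
  rw [invSqrtCoeff, invSqrtCoeff, prod_range_succ, Nat.factorial_succ]
  field_simp
  push_cast
  ring

/-- Gosper's certificate for the next lemma: with `c = invSqrtCoeff` and `n = j + k + 1`,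
`H j = c j * c (n - j) * (2 (n - j) + 1)` satisfies
`H j - H (j + 1) = (n + 1) * c j / (j + 1) * c (n - j)`. -/
theorem invSqrtCoeff_gosper_step (j k : ℕ) :
    invSqrtCoeff j * invSqrtCoeff (k + 1) * (2 * (k + 1 : ℕ) + 1)
      - invSqrtCoeff (j + 1) * invSqrtCoeff k * (2 * k + 1)
      = ((j + k + 1 : ℕ) + 1) * (invSqrtCoeff j / (j + 1) * invSqrtCoeff (k + 1)) := by
  have hj := succ_mul_invSqrtCoeff_succ j
  have hk := succ_mul_invSqrtCoeff_succ k
  field_simp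
  push_cast
  linear_combination (-(2 * k + 1) * invSqrtCoeff k) * hj + ((2 * j + 1) * invSqrtCoeff j) * hk

theorem sum_antidiagonal_invSqrtCoeff_div_succ_mul (n : ℕ) :
    ∑ p ∈ antidiagonal n, invSqrtCoeff p.1 / (p.1 + 1) * invSqrtCoeff p.2
      = invSqrtCoeff (n + 1) := by
  set c := invSqrtCoeff
  set H : ℕ → ℚ := fun j => c j * c (n - j) * (2 * (n - j : ℕ) + 1) with hH
  have step : ∀ j ∈ range n,
      H j - H (j + 1) = ((n : ℚ) + 1) * (c j / (j + 1) * c (n - j)) := by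
    intro j hj
    obtain ⟨k, rfl⟩ : ∃ k, n = j + k + 1 := ⟨n - j - 1, by grind⟩
    have h1 : j + k + 1 - j = k + 1 := by omega
    have h2 : j + k + 1 - (j + 1) = k := by omega
    simp only [hH, h1, h2]
    exact invSqrtCoeff_gosper_step j k
  have telescope :
      ((n : ℚ) + 1) * ∑ j ∈ range n, c j / (j + 1) * c (n - j) = 2 * n * c n := by
    rw [mul_sum, ← sum_congr rfl step, sum_range_sub']
    simp only [hH, Nat.sub_zero, Nat.sub_self, invSqrtCoeff_zero, c]
    push_cast
    ring
  have hn : (n : ℚ) + 1 ≠ 0 := by positivity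
  apply mul_left_cancel₀ hn
  rw [Nat.sum_antidiagonal_eq_sum_range_succ_mk, sum_range_succ, mul_add, telescope,
    succ_mul_invSqrtCoeff_succ]
  simp only [c, Nat.sub_self, invSqrtCoeff_zero]
  field_simp

namespace PlaneTree

theorem numVertices_node (ts : List PlaneTree) :
    numVertices (node ts) = 1 + (ts.map numVertices).sum := by
  rw [numVertices, List.attach_map_val]

theorem vertexHookProd_node {α : Type} [CommMonoid α] (g : ℕ → α) (ts : List PlaneTree) :
    vertexHookProd g (node ts) = g (numVertices (node ts)) * (ts.map (vertexHookProd g)).prod := by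
  rw [vertexHookProd, List.attach_map_val]

theorem numVertices_pos (T : PlaneTree) : 0 < numVertices T := by
  cases T
  rw [numVertices_node]
  omega

open Classical in
noncomputable def forestsOfSize : ℕ → Finset (List PlaneTree)
  | 0 => {[]}
  | n + 1 => (antidiagonal n).attach.biUnion fun p =>
      (forestsOfSize p.1.1 ×ˢ forestsOfSize p.1.2).image fun F => node F.1 :: F.2
decreasing_by all_goals have := mem_antidiagonal.mp p.2; omega

theorem mem_forestsOfSize {n : ℕ} {F : List PlaneTree} :
    F ∈ forestsOfSize n ↔ (F.map numVertices).sum = n := by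
  induction n using Nat.strong_induction_on generalizing F with
  | _ n ih =>
  rcases n with _ | n
  · rw [forestsOfSize, mem_singleton]
    cases F with
    | nil => simp
    | cons T G =>
      have := numVertices_pos T
      simp only [reduceCtorEq, false_iff, List.map_cons, List.sum_cons]
      omega
  · rw [forestsOfSize]
    simp only [mem_biUnion, mem_attach, true_and, mem_image, mem_product, Subtype.exists,
      HasAntidiagonal.mem_antidiagonal, Prod.exists]
    constructor
    · rintro ⟨i, k, hik, ts, G, ⟨hts, hG⟩, rfl⟩
      rw [ih i (by omega)] at hts
      rw [ih k (by omega)] at hG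
      simp only [List.map_cons, List.sum_cons, numVertices_node, hts, hG]
      omega
    · intro h
      cases F with
      | nil => simp at h
      | cons T G =>
        obtain ⟨ts⟩ := T
        simp only [List.map_cons, List.sum_cons, numVertices_node] at h
        exact ⟨_, _, by omega, ts, G,
          ⟨(ih _ (by omega)).2 rfl, (ih _ (by omega)).2 rfl⟩, rfl⟩

theorem sum_forestsOfSize_succ {M : Type*} [AddCommMonoid M] (w : List PlaneTree → M)
    (n : ℕ) :
    ∑ F ∈ forestsOfSize (n + 1), w F
      = ∑ p ∈ antidiagonal n, ∑ ts ∈ forestsOfSize p.1, ∑ G ∈ forestsOfSize p.2,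
          w (node ts :: G) := by
  classical
  rw [forestsOfSize, sum_biUnion, ← sum_attach (antidiagonal n)]
  · refine sum_congr rfl fun p _ => ?_
    rw [sum_image, sum_product]
    rintro ⟨ts, G⟩ - ⟨ts', G'⟩ - h
    simpa using h
  · rintro p - q - hpq
    refine disjoint_left.2 ?_
    simp only [mem_image, mem_product, not_exists, not_and, and_imp, Prod.forall,
      forall_exists_index]
    rintro _ ts G hts hG rfl ts' G' hts' hG' h
    simp only [List.cons.injEq, node.injEq] at h
    obtain ⟨rfl, rfl⟩ := h
    rw [mem_forestsOfSize] at hts hG hts' hG'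
    exact hpq (Subtype.ext (Prod.ext (hts.symm.trans hts') (hG.symm.trans hG')))

theorem finsum_eq_sum_forestsOfSize {M : Type*} [AddCommMonoid M] (w : List PlaneTree → M)
    (n : ℕ) :
    ∑ᶠ F : {F : List PlaneTree // (F.map numVertices).sum = n}, w F.1
      = ∑ F ∈ forestsOfSize n, w F := by
  have hset : {F : List PlaneTree | (F.map numVertices).sum = n} = ↑(forestsOfSize n) := by
    ext F
    simp [mem_forestsOfSize]
  rw [← finsum_mem_coe_finset, ← hset]
  exact finsum_set_coe_eq_finsum_mem _

noncomputable def forestHookSum {R : Type} [CommSemiring R] (g : ℕ → R) (n : ℕ) : R :=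
  ∑ F ∈ forestsOfSize n, (F.map (vertexHookProd g)).prod

theorem forestHookSum_zero {R : Type} [CommSemiring R] (g : ℕ → R) : forestHookSum g 0 = 1 := by
  simp [forestHookSum, forestsOfSize]

theorem forestHookSum_succ {R : Type} [CommSemiring R] (g : ℕ → R) (n : ℕ) :
    forestHookSum g (n + 1)
      = ∑ p ∈ antidiagonal n, g (p.1 + 1) * forestHookSum g p.1 * forestHookSum g p.2 := by
  rw [forestHookSum, sum_forestsOfSize_succ]
  refine sum_congr rfl fun p _ => ?_
  rw [forestHookSum, forestHookSum, mul_sum _ _ (g (p.1 + 1)), sum_mul_sum]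
  refine sum_congr rfl fun ts hts => sum_congr rfl fun G _ => ?_
  rw [mem_forestsOfSize] at hts
  rw [List.map_cons, List.prod_cons, vertexHookProd_node, numVertices_node, hts, add_comm 1]

theorem forestHookSum_inv_eq_invSqrtCoeff (n : ℕ) :
    forestHookSum (fun h => 1 / (h : ℚ)) n = invSqrtCoeff n := by
  induction n using Nat.strong_induction_on with
  | _ n ih =>
  rcases n with _ | n
  · rw [forestHookSum_zero, invSqrtCoeff_zero]
  · rw [forestHookSum_succ, ← sum_antidiagonal_invSqrtCoeff_div_succ_mul]
    refine sum_congr rfl fun p hp => ?_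
    rw [ih p.1 (Finset.Nat.antidiagonal.fst_lt hp), ih p.2 (Finset.Nat.antidiagonal.snd_lt hp)]
    push_cast
    ring

end PlaneTree

/-- `n! · Σ_{F∈F(n)} Π_{v∈V(F)} 1/h_v = (2n-1)!! = Π_{i=0}^{n-1}(2i+1)`, summed over plane
forests with `n` vertices. -/
theorem hook_reciprocal_sum_forests (n : ℕ) :
    (n.factorial : ℚ) *
      ∑ᶠ F : {F : List PlaneTree // (F.map PlaneTree.numVertices).sum = n},
        (F.1.map (PlaneTree.vertexHookProd (fun h => 1 / (h : ℚ)))).prod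
      = ∏ i ∈ Finset.range n, ((2 * i + 1 : ℕ) : ℚ) := by
  rw [PlaneTree.finsum_eq_sum_forestsOfSize (fun F => (F.map _).prod), ← PlaneTree.forestHookSum,
    PlaneTree.forestHookSum_inv_eq_invSqrtCoeff, invSqrtCoeff,
    mul_div_cancel₀ _ (by exact_mod_cast n.factorial_ne_zero)]
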